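/- arXiv:1105.1320 — 3 statements merged into one kernel-verified Lean document; each statement's English description precedes it below -/
import Mathlib

section
/- The set of maximizers of any càdlàg function f : [a,b] → ℝ is a nonempty compact subset of [a,b], where a point x is called a maximizer if either f(x) or the left limit f(x−) equals sup_{ξ∈[a,b]} f(ξ). -/
open Filter Set Topology

/-- `f` is càdlàg on `[a,b]` with left-limit function `L`: `f` is right-continuous at
every point of `[a,b)`, the left limit of `f` at every `t ∈ (a,b]` exists and equals
`L t`, and by convention `L a = f a`. -/
def CadlagOnWith (a b : ℝ) (f L : ℝ → ℝ) : Prop :=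
  (∀ t ∈ Set.Ico a b, Filter.Tendsto f (nhdsWithin t (Set.Ico t b)) (nhds (f t))) ∧
  (∀ t ∈ Set.Ioc a b, Filter.Tendsto f (nhdsWithin t (Set.Ico a t)) (nhds (L t))) ∧
  L a = f a

/-- `x` is a maximizer of `f` on `[a,b]`: `max (f x) (f (x-))` equals `sup_{[a,b]} f`. -/
def IsMaxPt (a b : ℝ) (f L : ℝ → ℝ) (x : ℝ) : Prop :=
  x ∈ Set.Icc a b ∧ max (f x) (L x) = sSup (f '' Set.Icc a b)

/-- Key extraction lemma: along a nontrivial filter converging to `x` within `[a,b]`,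
there is a nontrivial subfilter along which `f` tends to `f x` or to `L x`. -/
lemma cadlag_key {a b : ℝ} {f L : ℝ → ℝ} (hf : CadlagOnWith a b f L) {F : Filter ℝ}
    [hFne : F.NeBot] {x : ℝ} (hx : x ∈ Set.Icc a b) (hid : Tendsto id F (𝓝 x))
    (hmem : ∀ᶠ y in F, y ∈ Set.Icc a b) :
    ∃ F' : Filter ℝ, F'.NeBot ∧ F' ≤ F ∧
      (Tendsto f F' (𝓝 (f x)) ∨ Tendsto f F' (𝓝 (L x))) := by
  by_cases hcase : (F ⊓ 𝓟 (Set.Ici x)).NeBot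
  · refine ⟨F ⊓ 𝓟 (Set.Ici x), hcase, inf_le_left, Or.inl ?_⟩
    have hgex : ∀ᶠ y in F ⊓ 𝓟 (Set.Ici x), x ≤ y := by
      refine eventually_inf_principal.2 (Eventually.of_forall fun y hy => hy)
    rcases eq_or_lt_of_le hx.2 with hxb | hxb
    · -- x = b : eventually y = x
      have h1 : ∀ᶠ y in F ⊓ 𝓟 (Set.Ici x), y = x := by
        filter_upwards [hmem.filter_mono inf_le_left, hgex] with y hy hy'
        exact le_antisymm (hxb ▸ hy.2) hy'
      exact Tendsto.congr' (by filter_upwards [h1] with y hy; rw [hy]) tendsto_const_nhds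
    · have hrc := hf.1 x ⟨hx.1, hxb⟩
      have hid' : Tendsto id (F ⊓ 𝓟 (Set.Ici x)) (𝓝 x) := hid.mono_left inf_le_left
      have hlt : ∀ᶠ y in F ⊓ 𝓟 (Set.Ici x), y < b := hid'.eventually (eventually_lt_nhds hxb)
      have : Tendsto id (F ⊓ 𝓟 (Set.Ici x)) (𝓝[Set.Ico x b] x) := by
        rw [tendsto_nhdsWithin_iff]
        exact ⟨hid', by filter_upwards [hgex, hlt] with y h1 h2; exact ⟨h1, h2⟩⟩
      exact hrc.comp this
  · rw [not_neBot, inf_principal_eq_bot] at hcase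
    have hlt : ∀ᶠ y in F, y < x := by
      filter_upwards [hcase] with y hy; simpa using hy
    have hax : a < x := by
      obtain ⟨y, hy1, hy2⟩ := (hmem.and hlt).exists
      exact lt_of_le_of_lt hy1.1 hy2
    have hl := hf.2.1 x ⟨hax, hx.2⟩
    have : Tendsto id F (𝓝[Set.Ico a x] x) := by
      rw [tendsto_nhdsWithin_iff]
      exact ⟨hid, by filter_upwards [hmem, hlt] with y h1 h2; exact ⟨h1.1, h2⟩⟩
    exact ⟨F, hFne, le_refl _, Or.inr (hl.comp this)⟩

lemma cadlag_bddAbove {a b : ℝ} (hab : a ≤ b) {f L : ℝ → ℝ} (hf : CadlagOnWith a b f L) :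
    BddAbove (f '' Set.Icc a b) := by
  by_contra hbd
  rw [not_bddAbove_iff] at hbd
  have H : ∀ n : ℕ, ∃ y, y ∈ Set.Icc a b ∧ (n : ℝ) < f y := by
    intro n
    obtain ⟨z, hz, hz'⟩ := hbd n
    obtain ⟨y, hy, rfl⟩ := hz
    exact ⟨y, hy, hz'⟩
  choose y hy hfy using H
  have htop : Tendsto (fun n => f (y n)) atTop atTop :=
    tendsto_atTop_mono (fun n => (hfy n).le) tendsto_natCast_atTop_atTop
  have hle : map y atTop ≤ 𝓟 (Set.Icc a b) := by
    rw [le_principal_iff, mem_map]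
    exact Eventually.of_forall hy
  obtain ⟨x, hxmem, hcl⟩ := isCompact_Icc.exists_clusterPt hle
  set F := 𝓝 x ⊓ map y atTop with hF
  haveI : F.NeBot := hcl
  have hid : Tendsto id F (𝓝 x) := tendsto_id'.2 inf_le_left
  have hmem : ∀ᶠ z in F, z ∈ Set.Icc a b :=
    mem_inf_of_right (le_principal_iff.1 hle)
  have htopF : Tendsto f F atTop := by
    have : Tendsto f (map y atTop) atTop := tendsto_map'_iff.2 htop
    exact this.mono_left inf_le_right
  obtain ⟨F', hF'ne, hF'le, hF'⟩ := cadlag_key hf hxmem hid hmem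
  haveI := hF'ne
  have htopF' : Tendsto f F' atTop := htopF.mono_left hF'le
  rcases hF' with h | h
  · exact not_tendsto_nhds_of_tendsto_atTop htopF' _ h
  · exact not_tendsto_nhds_of_tendsto_atTop htopF' _ h

lemma cadlag_max_le {a b : ℝ} (hab : a ≤ b) {f L : ℝ → ℝ} (hf : CadlagOnWith a b f L)
    {x : ℝ} (hx : x ∈ Set.Icc a b) :
    max (f x) (L x) ≤ sSup (f '' Set.Icc a b) := by
  have hbdd := cadlag_bddAbove hab hf
  have h1 : f x ≤ sSup (f '' Set.Icc a b) := le_csSup hbdd (Set.mem_image_of_mem f hx)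
  rcases eq_or_lt_of_le hx.1 with hax | hax
  · rw [max_le_iff]
    refine ⟨h1, ?_⟩
    rw [← hax] at h1 ⊢
    rw [hf.2.2]
    exact h1
  · rw [max_le_iff]
    refine ⟨h1, ?_⟩
    have hG : (𝓝[Set.Ico a x] x).NeBot := by
      rw [← mem_closure_iff_nhdsWithin_neBot, closure_Ico hax.ne]
      exact Set.right_mem_Icc.2 hax.le
    have hl := hf.2.1 x ⟨hax, hx.2⟩
    refine le_of_tendsto hl ?_
    filter_upwards [self_mem_nhdsWithin] with z hz
    exact le_csSup hbdd (Set.mem_image_of_mem f ⟨hz.1, hz.2.le.trans hx.2⟩)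

/-- If `y n ∈ [a,b]`, `f (y n) → sup` and `x` is a cluster point of `y` in `[a,b]`,
then `x` is a maximizer. -/
lemma cadlag_maxpt_of_cluster {a b : ℝ} (hab : a ≤ b) {f L : ℝ → ℝ}
    (hf : CadlagOnWith a b f L) {y : ℕ → ℝ} (hy : ∀ n, y n ∈ Set.Icc a b)
    (hfy : Tendsto (fun n => f (y n)) atTop (𝓝 (sSup (f '' Set.Icc a b))))
    {x : ℝ} (hx : x ∈ Set.Icc a b) (hcl : (𝓝 x ⊓ map y atTop).NeBot) :
    IsMaxPt a b f L x := by
  set M := sSup (f '' Set.Icc a b) with hM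
  set F := 𝓝 x ⊓ map y atTop with hFdef
  haveI : F.NeBot := hcl
  have hid : Tendsto id F (𝓝 x) := tendsto_id'.2 inf_le_left
  have hmem : ∀ᶠ z in F, z ∈ Set.Icc a b := by
    have : ∀ᶠ z in map y atTop, z ∈ Set.Icc a b := by
      rw [eventually_map]; exact Eventually.of_forall hy
    exact this.filter_mono inf_le_right
  have hMF : Tendsto f F (𝓝 M) := by
    have : Tendsto f (map y atTop) (𝓝 M) := tendsto_map'_iff.2 hfy
    exact this.mono_left inf_le_right
  obtain ⟨F', hF'ne, hF'le, hF'⟩ := cadlag_key hf hx hid hmem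
  haveI := hF'ne
  have hMF' : Tendsto f F' (𝓝 M) := hMF.mono_left hF'le
  have hge : M ≤ max (f x) (L x) := by
    rcases hF' with h | h
    · rw [tendsto_nhds_unique hMF' h]; exact le_max_left _ _
    · rw [tendsto_nhds_unique hMF' h]; exact le_max_right _ _
  exact ⟨hx, le_antisymm (cadlag_max_le hab hf hx) hge⟩

/-- Near any maximizer there are points where `f` is close to the supremum. -/
lemma cadlag_approx {a b : ℝ} (hab : a ≤ b) {f L : ℝ → ℝ} (hf : CadlagOnWith a b f L)
    {x' : ℝ} (hx' : IsMaxPt a b f L x') {ε : ℝ} (hε : 0 < ε) :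
    ∃ y, y ∈ Set.Icc a b ∧ |y - x'| < ε ∧ sSup (f '' Set.Icc a b) - ε < f y := by
  set M := sSup (f '' Set.Icc a b) with hM
  rcases max_choice (f x') (L x') with h | h
  · refine ⟨x', hx'.1, by simpa using hε, ?_⟩
    have : f x' = M := by rw [← h]; exact hx'.2
    linarith
  · have hLM : L x' = M := by rw [← h]; exact hx'.2
    rcases eq_or_lt_of_le hx'.1.1 with hax | hax
    · refine ⟨x', hx'.1, by simpa using hε, ?_⟩
      rw [← hax] at hLM
      have : f x' = M := by rw [← hax, ← hf.2.2]; exact hLM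
      linarith
    · have hG : (𝓝[Set.Ico a x'] x').NeBot := by
        rw [← mem_closure_iff_nhdsWithin_neBot, closure_Ico hax.ne]
        exact Set.right_mem_Icc.2 hax.le
      have hl := hf.2.1 x' ⟨hax, hx'.1.2⟩
      have h1 : ∀ᶠ z in 𝓝[Set.Ico a x'] x', M - ε < f z := by
        rw [hLM] at hl
        exact hl.eventually (eventually_gt_nhds (by linarith))
      have h2 : ∀ᶠ z in 𝓝[Set.Ico a x'] x', |z - x'| < ε := by
        have : ∀ᶠ z in 𝓝 x', |z - x'| < ε := by
          have := Metric.ball_mem_nhds x' hε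
          filter_upwards [this] with z hz
          simpa [Real.dist_eq] using hz
        exact this.filter_mono nhdsWithin_le_nhds
      have h3 : ∀ᶠ z in 𝓝[Set.Ico a x'] x', z ∈ Set.Icc a b := by
        filter_upwards [self_mem_nhdsWithin] with z hz
        exact ⟨hz.1, hz.2.le.trans hx'.1.2⟩
      obtain ⟨z, hz1, hz2, hz3⟩ := (h1.and (h2.and h3)).exists
      exact ⟨z, hz3, hz2, hz1⟩

/-- The set of maximizers of a càdlàg function on `[a,b]` is nonempty and compact. -/
theorem maximizers_nonempty_compact (a b : ℝ) (hab : a ≤ b) (f L : ℝ → ℝ)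
    (hf : CadlagOnWith a b f L) :
    {x | IsMaxPt a b f L x}.Nonempty ∧ IsCompact {x | IsMaxPt a b f L x} := by
  set M := sSup (f '' Set.Icc a b) with hM
  have hbdd := cadlag_bddAbove hab hf
  have hne : (f '' Set.Icc a b).Nonempty := ⟨f a, Set.mem_image_of_mem f ⟨le_refl a, hab⟩⟩
  have hfle : ∀ z ∈ Set.Icc a b, f z ≤ M := fun z hz => le_csSup hbdd (Set.mem_image_of_mem f hz)
  have hseq : ∀ n : ℕ, ∃ y, y ∈ Set.Icc a b ∧ M - 1 / (n + 1) < f y := by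
    intro n
    have hpos : (0:ℝ) < 1 / (n + 1) := by positivity
    obtain ⟨z, hz, hz'⟩ := exists_lt_of_lt_csSup hne (show M - 1/(n+1) < M by linarith)
    obtain ⟨y, hy, rfl⟩ := hz
    exact ⟨y, hy, hz'⟩
  -- a general squeeze lemma for such sequences
  have hsq : ∀ y : ℕ → ℝ, (∀ n, y n ∈ Set.Icc a b) → (∀ n, M - 1 / (n + 1) < f (y n)) →
      Tendsto (fun n => f (y n)) atTop (𝓝 M) := by
    intro y hy hfy
    have h0 : Tendsto (fun n : ℕ => f (y n) - M) atTop (𝓝 0) := by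
      refine squeeze_zero_norm (fun n => ?_) tendsto_one_div_add_atTop_nhds_zero_nat
      have h1 := hfy n
      have h2 := hfle (y n) (hy n)
      rw [Real.norm_eq_abs, abs_le]
      constructor <;> [linarith; ·
        have : (0:ℝ) < 1 / (n + 1) := by positivity
        linarith]
    have := h0.add_const M
    simpa using this
  constructor
  · -- nonemptiness
    choose y hy hfy using hseq
    have htend := hsq y hy hfy
    have hle : map y atTop ≤ 𝓟 (Set.Icc a b) := by
      rw [le_principal_iff, mem_map]; exact Eventually.of_forall hy
    obtain ⟨x, hxmem, hcl⟩ := isCompact_Icc.exists_clusterPt hle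
    exact ⟨x, cadlag_maxpt_of_cluster hab hf hy htend hxmem hcl⟩
  · -- compactness
    have hsub : {x | IsMaxPt a b f L x} ⊆ Set.Icc a b := fun x hx => hx.1
    refine isCompact_Icc.of_isClosed_subset ?_ hsub
    rw [← closure_subset_iff_isClosed]
    intro x hx
    obtain ⟨x', hx'S, hx'lim⟩ := mem_closure_iff_seq_limit.1 hx
    have H : ∀ n : ℕ, ∃ y, y ∈ Set.Icc a b ∧ |y - x' n| < 1 / (n + 1) ∧
        M - 1 / (n + 1) < f y := by
      intro n
      exact cadlag_approx hab hf (hx'S n) (by positivity)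
    choose y hy1 hy2 hy3 using H
    have hylim : Tendsto y atTop (𝓝 x) := by
      have h0 : Tendsto (fun n : ℕ => y n - x' n) atTop (𝓝 0) :=
        squeeze_zero_norm (fun n => (hy2 n).le) tendsto_one_div_add_atTop_nhds_zero_nat
      have := hx'lim.add h0
      simpa using this
    have htend := hsq y hy1 hy3
    have hxmem : x ∈ Set.Icc a b :=
      isClosed_Icc.mem_of_tendsto hylim (Eventually.of_forall hy1)
    have hcl : (𝓝 x ⊓ map y atTop).NeBot := by
      have : map y atTop ≤ 𝓝 x := hylim
      rw [inf_eq_right.2 this]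
      exact map_neBot
    exact cadlag_maxpt_of_cluster hab hf hy1 htend hxmem hcl
end

section
/- Every càdlàg function f : [a,b] → ℝ has a smallest maximizer: there exists a unique x* ∈ [a,b] such that max(f(x*), f(x*−)) = sup_{[a,b]} f and x* ≤ ξ for every other point ξ with max(f(ξ), f(ξ−)) = sup_{[a,b]} f. -/
open Filter Set Topology

/-!
The envelope `g = max f L` is upper semicontinuous on `[a,b]`: to the right of `x`, both `f`
and its left limits stay close to `f x` by right-continuity, and to the left of `x` they stay
close to `L x`. Hence `g` attains its maximum on the compact `[a,b]`, that maximum is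
`sup_{[a,b]} f`, and the maximizers form the compact nonempty superlevel set `{g ≥ sup f}`,
which has a least element.
-/

namespace CadlagOnWith

variable {a b : ℝ} {f L : ℝ → ℝ}

theorem tendsto_nhdsGE (hf : CadlagOnWith a b f L) {t : ℝ} (ht : t ∈ Ico a b) :
    Tendsto f (𝓝[≥] t) (𝓝 (f t)) := by
  simpa only [nhdsWithin_Ico_eq_nhdsGE ht.2] using hf.1 t ht

theorem tendsto_nhdsLT (hf : CadlagOnWith a b f L) {t : ℝ} (ht : t ∈ Ioc a b) :
    Tendsto f (𝓝[<] t) (𝓝 (L t)) := by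
  simpa only [nhdsWithin_Ico_eq_nhdsLT ht.1] using hf.2.1 t ht

theorem eventually_leftLim_le (hf : CadlagOnWith a b f L) {s : Set ℝ} (hs : IsOpen s)
    (hsab : s ⊆ Ioc a b) {x c : ℝ} (h : ∀ᶠ z in 𝓝[s] x, f z ≤ c) :
    ∀ᶠ z in 𝓝[s] x, L z ≤ c := by
  filter_upwards [eventually_eventually_nhdsWithin.2 h, self_mem_nhdsWithin] with z hz hzs
  rw [hs.nhdsWithin_eq hzs] at hz
  exact le_of_tendsto (hf.tendsto_nhdsLT (hsab hzs)) (eventually_nhdsWithin_of_eventually_nhds hz)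

theorem eventually_max_lt_nhdsLT (hf : CadlagOnWith a b f L) {x y : ℝ} (hx : x ∈ Ioc a b)
    (hy : L x < y) : ∀ᶠ z in 𝓝[<] x, max (f z) (L z) < y := by
  obtain ⟨c, hxc, hcy⟩ := exists_between hy
  have hfc : ∀ᶠ z in 𝓝[Ioo a x] x, f z ≤ c := by
    rw [nhdsWithin_Ioo_eq_nhdsLT hx.1]
    exact ((hf.tendsto_nhdsLT hx).eventually_lt_const hxc).mono fun _ => le_of_lt
  rw [← nhdsWithin_Ioo_eq_nhdsLT hx.1]
  filter_upwards [hfc, hf.eventually_leftLim_le isOpen_Ioo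
    (Ioo_subset_Ioc_self.trans (Ioc_subset_Ioc_right hx.2)) hfc] with z hfz hLz
  exact max_lt (hfz.trans_lt hcy) (hLz.trans_lt hcy)

theorem eventually_max_lt_nhdsGE (hf : CadlagOnWith a b f L) {x y : ℝ} (hx : x ∈ Ico a b)
    (hy : max (f x) (L x) < y) : ∀ᶠ z in 𝓝[≥] x, max (f z) (L z) < y := by
  obtain ⟨c, hxc, hcy⟩ := exists_between hy
  have hfc : ∀ᶠ z in 𝓝[≥] x, f z < c :=
    (hf.tendsto_nhdsGE hx).eventually_lt_const ((le_max_left _ _).trans_lt hxc)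
  have hLc : ∀ᶠ z in 𝓝[>] x, L z ≤ c := by
    rw [← nhdsWithin_Ioo_eq_nhdsGT hx.2]
    refine hf.eventually_leftLim_le isOpen_Ioo (Ioo_subset_Ioc_self.trans
      (Ioc_subset_Ioc_left hx.1)) ?_
    have hIoo : Ioo x b ⊆ Ici x := Ioo_subset_Ioi_self.trans Ioi_subset_Ici_self
    exact (hfc.filter_mono (nhdsWithin_mono _ hIoo)).mono fun _ => le_of_lt
  have hLy : ∀ᶠ z in 𝓝[≥] x, L z < y := by
    rw [← Ioi_insert, nhdsWithin_insert, eventually_sup, eventually_pure]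
    exact ⟨(le_max_right _ _).trans_lt hy, hLc.mono fun _ h => h.trans_lt hcy⟩
  filter_upwards [hfc, hLy] with z hfz hLz
  exact max_lt (hfz.trans hcy) hLz

theorem upperSemicontinuousOn_max (hf : CadlagOnWith a b f L) :
    UpperSemicontinuousOn (fun x => max (f x) (L x)) (Icc a b) := by
  intro x hx y hy
  have hsplit : 𝓝[Icc a b] x ≤ 𝓝[Icc a b ∩ Iio x] x ⊔ 𝓝[Icc a b ∩ Ici x] x := by
    rw [← nhdsWithin_union, ← inter_union_distrib_left, Iio_union_Ici, inter_univ]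
  refine Eventually.filter_mono hsplit (eventually_sup.2 ⟨?_, ?_⟩)
  · rcases hx.1.eq_or_lt with hax | hax
    · have hempty : Icc a b ∩ Iio x = ∅ :=
        eq_empty_of_forall_notMem fun z hz => (hz.2.trans_le (hax ▸ hz.1.1)).false
      rw [hempty, nhdsWithin_empty]
      exact eventually_bot
    · exact nhdsWithin_mono _ inter_subset_right
        (hf.eventually_max_lt_nhdsLT ⟨hax, hx.2⟩ ((le_max_right _ _).trans_lt hy))
  · rcases hx.2.eq_or_lt with hxb | hxb
    · have hy' : ∀ᶠ z in 𝓝[{x}] x, max (f z) (L z) < y := by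
        rwa [nhdsWithin_singleton, eventually_pure]
      exact nhdsWithin_mono _ (fun z hz => le_antisymm (hxb ▸ hz.1.2) hz.2) hy'
    · exact nhdsWithin_mono _ inter_subset_right (hf.eventually_max_lt_nhdsGE ⟨hx.1, hxb⟩ hy)

theorem bddAbove_image (hf : CadlagOnWith a b f L) : BddAbove (f '' Icc a b) := by
  obtain ⟨C, hC⟩ := hf.upperSemicontinuousOn_max.bddAbove_of_isCompact isCompact_Icc
  refine ⟨C, ?_⟩
  rintro _ ⟨x, hx, rfl⟩
  exact (le_max_left _ _).trans (hC ⟨x, hx, rfl⟩)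

theorem max_le_sSup (hf : CadlagOnWith a b f L) {x : ℝ} (hx : x ∈ Icc a b) :
    max (f x) (L x) ≤ sSup (f '' Icc a b) := by
  have hfM : ∀ z ∈ Icc a b, f z ≤ sSup (f '' Icc a b) :=
    fun z hz => le_csSup hf.bddAbove_image ⟨z, hz, rfl⟩
  refine max_le (hfM x hx) ?_
  rcases hx.1.eq_or_lt with rfl | hax
  · exact hf.2.2 ▸ hfM _ hx
  · refine le_of_tendsto (hf.tendsto_nhdsLT ⟨hax, hx.2⟩) ?_
    rw [← nhdsWithin_Ioo_eq_nhdsLT hax]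
    filter_upwards [self_mem_nhdsWithin] with z hz
    exact hfM z ⟨hz.1.le, hz.2.le.trans hx.2⟩

theorem setOf_isMaxPt_eq (hf : CadlagOnWith a b f L) :
    {x | IsMaxPt a b f L x} =
      Icc a b ∩ (fun x => max (f x) (L x)) ⁻¹' Ici (sSup (f '' Icc a b)) := by
  ext x
  exact and_congr_right fun hx => (hf.max_le_sSup hx).ge_iff_eq.symm

theorem isCompact_setOf_isMaxPt (hf : CadlagOnWith a b f L) :
    IsCompact {x | IsMaxPt a b f L x} :=
  hf.setOf_isMaxPt_eq ▸
    hf.upperSemicontinuousOn_max.isCompact_inter_preimage_Ici isCompact_Icc _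

theorem nonempty_setOf_isMaxPt (hf : CadlagOnWith a b f L) (hab : a ≤ b) :
    {x | IsMaxPt a b f L x}.Nonempty := by
  obtain ⟨x, hx, hmax⟩ :=
    hf.upperSemicontinuousOn_max.exists_isMaxOn (nonempty_Icc.2 hab) isCompact_Icc
  refine ⟨x, hx, le_antisymm (hf.max_le_sSup hx) (csSup_le (nonempty_Icc.2 hab |>.image f) ?_)⟩
  rintro _ ⟨z, hz, rfl⟩
  exact (le_max_left _ _).trans (hmax hz)

end CadlagOnWith

/-- Every càdlàg function on `[a,b]` has a unique smallest maximizer. -/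
theorem exists_unique_smallest_maximizer (a b : ℝ) (hab : a ≤ b) (f L : ℝ → ℝ)
    (hf : CadlagOnWith a b f L) :
    ∃! x : ℝ, IsMaxPt a b f L x ∧ ∀ ξ : ℝ, IsMaxPt a b f L ξ → x ≤ ξ := by
  obtain ⟨x, hx⟩ := hf.isCompact_setOf_isMaxPt.exists_isLeast (hf.nonempty_setOf_isMaxPt hab)
  exact ⟨x, hx, fun y (hy : IsLeast {x | IsMaxPt a b f L x} y) => hy.unique hx⟩
end

section
/- Let ψ_n, ψ_0 : [−C,C] → ℝ (n ≥ 1) be piecewise constant càdlàg functions, ψ_n(t) = Σ_{k∈ℤ} V_{n,k} 1{a_{n,k} ≤ t < a_{n,k+1}} with jump locations ⋯ < a_{n,−1} < a_{n,0} = 0 < a_{n,1} < ⋯ and real levels V_{n,k}, and similarly ψ_0 with jumps (a_k) and levels (V_k). Let ψ̃_n, ψ̃_0 be the associated pure jump functions ψ̃(t) = Σ_{k≥1} 1{a_k ≤ t} + Σ_{k≥1} 1{a_{−k} > t}. Assume ψ_n → ψ_0 and ψ̃_n → ψ̃_0 in the Skorohod topology on [−C,C], that ψ_0 has no jumps at ±C,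 and that for every finite A ⊂ ℤ there is a unique j ∈ A with V_j = max_{m∈A} V_m. Then the smallest maximizer of ψ_n on [−C,C] converges to the smallest maximizer of ψ_0, and the largest maximizer of ψ_n converges to the largest maximizer of ψ_0. -/
open Filter Set Topology

/-- `l` is an admissible time change of `[u,v]`. -/
def Adm (u v : ℝ) (l : ℝ → ℝ) : Prop :=
  StrictMonoOn l (Set.Icc u v) ∧ l '' Set.Icc u v = Set.Icc u v

/-- The Skorohod distance on `[u,v]`. -/
noncomputable def skorDist (u v : ℝ) (f g : ℝ → ℝ) : ℝ :=
  sInf {c | ∃ l : ℝ → ℝ, Adm u v l ∧ ∃ m e : ℝ, m + e = c ∧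
    (∀ s ∈ Set.Icc u v, ∀ t ∈ Set.Icc u v, s ≠ t →
      |Real.log ((l t - l s) / (t - s))| ≤ m) ∧
    (∀ x ∈ Set.Icc u v, |f x - g (l x)| ≤ e)}

/-- `x` is a maximizer of `f` on `[-C,C]`: `max (f x) (f (x-))` equals
`sup_{[-C,C]} f`, with the convention `f((-C)-) := f (-C)`. -/
def IsMaxPtOn (C : ℝ) (f : ℝ → ℝ) (x : ℝ) : Prop :=
  x ∈ Set.Icc (-C) C ∧
    max (f x) (if -C < x then Function.leftLim f x else f x) =
      sSup (f '' Set.Icc (-C) C)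

/-- `x` is the smallest maximizer of `f` on `[-C,C]`. -/
def IsSmallestMaxOn (C : ℝ) (f : ℝ → ℝ) (x : ℝ) : Prop :=
  IsMaxPtOn C f x ∧ ∀ y, IsMaxPtOn C f y → x ≤ y

/-- `x` is the largest maximizer of `f` on `[-C,C]`. -/
def IsLargestMaxOn (C : ℝ) (f : ℝ → ℝ) (x : ℝ) : Prop :=
  IsMaxPtOn C f x ∧ ∀ y, IsMaxPtOn C f y → y ≤ x

/-- The step function `ψ` is piecewise constant with strictly increasing jump locations
`A : ℤ → ℝ` (with `A 0 = 0`, `A → ±∞`) and levels `V : ℤ → ℝ`: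
`ψ t = V k` on `[A k, A (k+1))`. -/
def IsStepFunction (A : ℤ → ℝ) (V : ℤ → ℝ) (ψ : ℝ → ℝ) : Prop :=
  StrictMono A ∧ A 0 = 0 ∧ Filter.Tendsto A Filter.atTop Filter.atTop ∧
    Filter.Tendsto A Filter.atBot Filter.atBot ∧
    ∀ k : ℤ, ∀ t : ℝ, A k ≤ t → t < A (k + 1) → ψ t = V k

/-- `J` is the pure jump function `J t = Σ_{k≥1} 1{a_k ≤ t} + Σ_{k≥1} 1{a_{-k} > t}`
associated with the jump locations `A`: on `[A k, A (k+1))` it equals `k` if `k ≥ 0`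
and `-k-1` if `k < 0`. -/
def IsPureJump (A : ℤ → ℝ) (J : ℝ → ℝ) : Prop :=
  ∀ k : ℤ, ∀ t : ℝ, A k ≤ t → t < A (k + 1) →
    J t = if 0 ≤ k then (k : ℝ) else ((-k - 1 : ℤ) : ℝ)

/-!
Only the finitely many cells `kmin, …, kmax` of `ψ₀` meeting `[-C, C]` matter, and by the uniqueness
assumption one of them, `ks`, carries a strictly largest level; the maximizers of `ψ₀` are then the
closed cell `ks` clipped to `[-C, C]`. The jump functions are integer valued and count jumps away
from `0`, so Skorohod convergence `Jₙ → J₀` forces `ψₙ`, for large `n`, to have the same cells over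
`[-C, C]` with nearby jump locations. As no cell of `ψ₀` degenerates (there is no jump at `C`),
Skorohod convergence `ψₙ → ψ₀` then makes the levels close, so `ks` stays dominant and the extreme
maximizers of `ψₙ` are the clipped ends of its cell `ks`, which converge to those of `ψ₀`.
-/

section Cells

variable {A : ℤ → ℝ} {j k kmin kmax : ℤ} {t : ℝ}

lemma exists_mem_Ico_of_tendsto (htop : Tendsto A atTop atTop) (hbot : Tendsto A atBot atBot)
    (t : ℝ) : ∃ k, t ∈ Ico (A k) (A (k + 1)) := by
  obtain ⟨b, hb⟩ := (htop.eventually_gt_atTop t).exists_forall_of_atTop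
  obtain ⟨z, hz⟩ := (hbot.eventually_le_atBot t).exists
  obtain ⟨k, hk, hmax⟩ := Int.exists_greatest_of_bdd
    ⟨b, fun z hz => not_lt.1 fun h => (hb z h.le).not_ge hz⟩ ⟨z, hz⟩
  exact ⟨k, hk, not_le.1 fun h => (hmax _ h).not_gt (lt_add_one k)⟩

lemma eq_of_mem_Ico_of_mem_Ico (hA : Monotone A) (hj : t ∈ Ico (A j) (A (j + 1)))
    (hk : t ∈ Ico (A k) (A (k + 1))) : j = k := by
  have := hA.reflect_lt (hj.1.trans_lt hk.2)
  have := hA.reflect_lt (hk.1.trans_lt hj.2)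
  omega

lemma eq_of_mem_Ioc_of_mem_Ioc (hA : Monotone A) (hj : t ∈ Ioc (A j) (A (j + 1)))
    (hk : t ∈ Ioc (A k) (A (k + 1))) : j = k := by
  have := hA.reflect_lt (hj.1.trans_le hk.2)
  have := hA.reflect_lt (hk.1.trans_le hj.2)
  omega

lemma mem_Icc_of_lt_of_lt (hA : Monotone A) (hmin : A kmin < A (k + 1))
    (hmax : A k < A (kmax + 1)) : k ∈ Icc kmin kmax := by
  have := hA.reflect_lt hmin
  have := hA.reflect_lt hmax
  exact ⟨by omega, by omega⟩

end Cells

namespace IsStepFunction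

variable {A V : ℤ → ℝ} {ψ : ℝ → ℝ} {k : ℤ} {t : ℝ}

lemma strictMono (h : IsStepFunction A V ψ) : StrictMono A := h.1

lemma apply_zero (h : IsStepFunction A V ψ) : A 0 = 0 := h.2.1

lemma exists_mem_Ico (h : IsStepFunction A V ψ) (t : ℝ) : ∃ k, t ∈ Ico (A k) (A (k + 1)) :=
  exists_mem_Ico_of_tendsto h.2.2.1 h.2.2.2.1 t

lemma apply_eq (h : IsStepFunction A V ψ) (ht : t ∈ Ico (A k) (A (k + 1))) : ψ t = V k :=
  h.2.2.2.2 k t ht.1 ht.2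

lemma exists_mem_Ioc (h : IsStepFunction A V ψ) (t : ℝ) : ∃ k, t ∈ Ioc (A k) (A (k + 1)) := by
  obtain ⟨k, hk⟩ := h.exists_mem_Ico t
  rcases hk.1.lt_or_eq with hlt | rfl
  · exact ⟨k, hlt, hk.2.le⟩
  · exact ⟨k - 1, h.strictMono (sub_one_lt k), by rw [sub_add_cancel]⟩

lemma leftLim_eq (h : IsStepFunction A V ψ) (ht : t ∈ Ioc (A k) (A (k + 1))) :
    Function.leftLim ψ t = V k := by
  apply leftLim_eq_of_tendsto
  refine tendsto_const_nhds.congr' ?_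
  filter_upwards [Ioo_mem_nhdsLT ht.1] with s hs
  exact (h.apply_eq ⟨hs.1.le, hs.2.trans_le ht.2⟩).symm

lemma nonneg_iff (h : IsStepFunction A V ψ) (ht : t ∈ Ico (A k) (A (k + 1))) :
    0 ≤ k ↔ 0 ≤ t := by
  refine ⟨fun hk => ?_, fun ht0 => ?_⟩
  · exact h.apply_zero ▸ (h.strictMono.monotone hk).trans ht.1
  · by_contra! hk
    have := h.strictMono.monotone (show k + 1 ≤ 0 by omega)
    linarith [ht.2, h.apply_zero]

lemma exists_abs_le (h : IsStepFunction A V ψ) (u v : ℝ) : ∃ M, ∀ x ∈ Icc u v, |ψ x| ≤ M := by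
  obtain ⟨a, ha⟩ := h.exists_mem_Ico u
  obtain ⟨b, hb⟩ := h.exists_mem_Ico v
  obtain ⟨M, hM⟩ := ((finite_Icc a b).image fun k => |V k|).bddAbove
  refine ⟨M, fun x hx => ?_⟩
  obtain ⟨k, hk⟩ := h.exists_mem_Ico x
  have hkab := mem_Icc_of_lt_of_lt h.strictMono.monotone
    (ha.1.trans_lt (hx.1.trans_lt hk.2)) (hk.1.trans_lt (hx.2.trans_lt hb.2))
  exact h.apply_eq hk ▸ hM (mem_image_of_mem _ hkab)

end IsStepFunction

structure DominantCell (C : ℝ) (A V : ℤ → ℝ) (kmin kmax ks : ℤ) : Prop where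
  left_mem : -C ∈ Ico (A kmin) (A (kmin + 1))
  right_mem : C ∈ Ico (A kmax) (A (kmax + 1))
  mem : ks ∈ Icc kmin kmax
  lt : ∀ k ∈ Icc kmin kmax, k ≠ ks → V k < V ks

namespace DominantCell

variable {C : ℝ} {A V : ℤ → ℝ} {kmin kmax ks k : ℤ}

lemma le (hd : DominantCell C A V kmin kmax ks) (hk : k ∈ Icc kmin kmax) : V k ≤ V ks := by
  rcases eq_or_ne k ks with rfl | hne
  · exact le_rfl
  · exact (hd.lt k hk hne).le

lemma eq_iff (hd : DominantCell C A V kmin kmax ks) (hk : k ∈ Icc kmin kmax) :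
    V k = V ks ↔ k = ks :=
  ⟨fun he => by_contra fun hne => (hd.lt k hk hne).ne he, fun he => he ▸ rfl⟩

lemma jump_le (hd : DominantCell C A V kmin kmax ks) (hA : Monotone A) : A ks ≤ C :=
  (hA hd.mem.2).trans hd.right_mem.1

lemma lt_jump_succ (hd : DominantCell C A V kmin kmax ks) (hA : Monotone A) : -C < A (ks + 1) :=
  hd.left_mem.2.trans_le (hA (by linarith [hd.mem.1]))

end DominantCell

lemma exists_dominantCell {C : ℝ} {A V : ℤ → ℝ} {kmin kmax : ℤ} (hA : Monotone A) (hC : 0 ≤ C)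
    (hmin : -C ∈ Ico (A kmin) (A (kmin + 1))) (hmax : C ∈ Ico (A kmax) (A (kmax + 1)))
    (huniq : ∀ S : Finset ℤ, S.Nonempty → ∃! j : ℤ, j ∈ S ∧ ∀ i ∈ S, V i ≤ V j) :
    ∃ ks, DominantCell C A V kmin kmax ks := by
  have hle : kmin ≤ kmax := by
    have := hA.reflect_lt (hmin.1.trans_lt ((neg_le_self hC).trans_lt hmax.2))
    omega
  obtain ⟨ks, ⟨hks, hmaxks⟩, huniq⟩ := huniq (Finset.Icc kmin kmax) (Finset.nonempty_Icc.2 hle)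
  refine ⟨ks, hmin, hmax, Finset.mem_Icc.1 hks, fun k hk hne => ?_⟩
  have hk' : k ∈ Finset.Icc kmin kmax := Finset.mem_Icc.2 hk
  refine (hmaxks k hk').lt_of_ne fun he => hne (huniq k ⟨hk', fun i hi => ?_⟩)
  exact he ▸ hmaxks i hi

namespace IsStepFunction

variable {C : ℝ} {A V : ℤ → ℝ} {ψ : ℝ → ℝ} {kmin kmax ks : ℤ} {x : ℝ}

lemma apply_le_and_eq_iff (h : IsStepFunction A V ψ) (hd : DominantCell C A V kmin kmax ks)
    (hx : x ∈ Icc (-C) C) : ψ x ≤ V ks ∧ (ψ x = V ks ↔ x ∈ Ico (A ks) (A (ks + 1))) := by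
  obtain ⟨k, hk⟩ := h.exists_mem_Ico x
  have hkw := mem_Icc_of_lt_of_lt h.strictMono.monotone
    (hd.left_mem.1.trans_lt (hx.1.trans_lt hk.2)) (hk.1.trans_lt (hx.2.trans_lt hd.right_mem.2))
  rw [h.apply_eq hk, hd.eq_iff hkw]
  exact ⟨hd.le hkw, fun he => he ▸ hk, eq_of_mem_Ico_of_mem_Ico h.strictMono.monotone hk⟩

lemma leftLim_le_and_eq_iff (h : IsStepFunction A V ψ) (hd : DominantCell C A V kmin kmax ks)
    (hx : x ∈ Ioc (-C) C) :
    Function.leftLim ψ x ≤ V ks ∧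
      (Function.leftLim ψ x = V ks ↔ x ∈ Ioc (A ks) (A (ks + 1))) := by
  obtain ⟨k, hk⟩ := h.exists_mem_Ioc x
  have hkw := mem_Icc_of_lt_of_lt h.strictMono.monotone
    (hd.left_mem.1.trans_lt (hx.1.trans_le hk.2)) (hk.1.trans (hx.2.trans_lt hd.right_mem.2))
  rw [h.leftLim_eq hk, hd.eq_iff hkw]
  exact ⟨hd.le hkw, fun he => he ▸ hk, eq_of_mem_Ioc_of_mem_Ioc h.strictMono.monotone hk⟩

lemma sSup_image_eq (h : IsStepFunction A V ψ) (hC : 0 ≤ C)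
    (hd : DominantCell C A V kmin kmax ks) : sSup (ψ '' Icc (-C) C) = V ks := by
  have hA := h.strictMono
  have hmem : max (A ks) (-C) ∈ Icc (-C) C :=
    ⟨le_max_right _ _, max_le (hd.jump_le hA.monotone) (neg_le_self hC)⟩
  refine IsGreatest.csSup_eq ⟨⟨_, hmem, ?_⟩, ?_⟩
  · exact (h.apply_le_and_eq_iff hd hmem).2.2
      ⟨le_max_left _ _, max_lt (hA (lt_add_one ks)) (hd.lt_jump_succ hA.monotone)⟩
  · rintro _ ⟨y, hy, rfl⟩
    exact (h.apply_le_and_eq_iff hd hy).1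

theorem setOf_isMaxPtOn_eq (h : IsStepFunction A V ψ) (hC : 0 ≤ C)
    (hd : DominantCell C A V kmin kmax ks) :
    {x | IsMaxPtOn C ψ x} = Icc (max (A ks) (-C)) (min (A (ks + 1)) C) := by
  have hA := h.strictMono
  ext x
  simp only [mem_ofPred_eq, IsMaxPtOn, h.sSup_image_eq hC hd, mem_Icc, max_le_iff, le_min_iff]
  constructor
  · rintro ⟨hx, hmax⟩
    by_cases hxC : -C < x
    · rw [if_pos hxC] at hmax
      rcases max_eq_iff.1 hmax with ⟨he, -⟩ | ⟨he, -⟩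
      · have := (h.apply_le_and_eq_iff hd hx).2.1 he
        exact ⟨⟨this.1, hx.1⟩, this.2.le, hx.2⟩
      · have := (h.leftLim_le_and_eq_iff hd ⟨hxC, hx.2⟩).2.1 he
        exact ⟨⟨this.1.le, hx.1⟩, this.2, hx.2⟩
    · rw [if_neg hxC, max_self] at hmax
      have := (h.apply_le_and_eq_iff hd hx).2.1 hmax
      exact ⟨⟨this.1, hx.1⟩, this.2.le, hx.2⟩
  · rintro ⟨⟨hks, hxC⟩, hks1, hx⟩
    have hxI : x ∈ Icc (-C) C := ⟨hxC, hx⟩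
    refine ⟨hxI, ?_⟩
    rcases hks1.lt_or_eq with hlt | rfl
    · rw [(h.apply_le_and_eq_iff hd hxI).2.2 ⟨hks, hlt⟩, max_eq_left_iff]
      split_ifs with hxC'
      · exact (h.leftLim_le_and_eq_iff hd ⟨hxC', hx⟩).1
      · exact le_rfl
    · have hxC' := hd.lt_jump_succ hA.monotone
      rw [if_pos hxC', (h.leftLim_le_and_eq_iff hd ⟨hxC', hx⟩).2.2 ⟨hA (lt_add_one ks), le_rfl⟩,
        max_eq_right_iff]
      exact (h.apply_le_and_eq_iff hd hxI).1

end IsStepFunction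

lemma IsSmallestMaxOn.eq_of_setOf_eq_Icc {C a b x : ℝ} {f : ℝ → ℝ} (h : IsSmallestMaxOn C f x)
    (hS : {y | IsMaxPtOn C f y} = Icc a b) : x = a := by
  have hx : x ∈ Icc a b := hS ▸ h.1
  exact le_antisymm (h.2 a (hS ▸ ⟨le_rfl, hx.1.trans hx.2⟩ : a ∈ {y | IsMaxPtOn C f y})) hx.1

lemma IsLargestMaxOn.eq_of_setOf_eq_Icc {C a b x : ℝ} {f : ℝ → ℝ} (h : IsLargestMaxOn C f x)
    (hS : {y | IsMaxPtOn C f y} = Icc a b) : x = b := by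
  have hx : x ∈ Icc a b := hS ▸ h.1
  exact le_antisymm hx.2 (h.2 b (hS ▸ ⟨hx.1.trans hx.2, le_rfl⟩ : b ∈ {y | IsMaxPtOn C f y}))

section Skorohod

variable {u v ε : ℝ} {l f g : ℝ → ℝ}

lemma Adm.apply_left (hl : Adm u v l) (huv : u ≤ v) : l u = u := by
  obtain ⟨s, hs, hls⟩ : u ∈ l '' Icc u v := by rw [hl.2]; exact left_mem_Icc.2 huv
  have hlu : l u ∈ Icc u v := by rw [← hl.2]; exact mem_image_of_mem l (left_mem_Icc.2 huv)
  exact le_antisymm ((hl.1.monotoneOn (left_mem_Icc.2 huv) hs hs.1).trans_eq hls) hlu.1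

lemma Adm.apply_right (hl : Adm u v l) (huv : u ≤ v) : l v = v := by
  obtain ⟨s, hs, hls⟩ : v ∈ l '' Icc u v := by rw [hl.2]; exact right_mem_Icc.2 huv
  have hlv : l v ∈ Icc u v := by rw [← hl.2]; exact mem_image_of_mem l (right_mem_Icc.2 huv)
  exact le_antisymm hlv.2 (hls.symm.trans_le (hl.1.monotoneOn hs (right_mem_Icc.2 huv) hs.2))

lemma Adm.abs_sub_le {m x : ℝ} (hl : Adm u v l) (hm : 0 ≤ m) (hm1 : m ≤ 1)
    (hslope : ∀ s ∈ Icc u v, ∀ t ∈ Icc u v, s ≠ t → |Real.log ((l t - l s) / (t - s))| ≤ m)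
    (hx : x ∈ Icc u v) : |l x - x| ≤ 2 * m * (v - u) := by
  have huv : u ≤ v := hx.1.trans hx.2
  have hu : l u = u := hl.apply_left huv
  rcases hx.1.eq_or_lt with rfl | hux
  · rw [hu, sub_self, abs_zero]
    exact mul_nonneg (by positivity) (sub_nonneg.2 huv)
  set r := (l x - l u) / (x - u)
  have hr : 0 < r := div_pos (sub_pos.2 (hl.1 (left_mem_Icc.2 huv) hx hux)) (sub_pos.2 hux)
  have hlog := hslope u (left_mem_Icc.2 huv) x hx hux.ne
  have hr1 : |r - 1| ≤ 2 * m := by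
    rw [← Real.exp_log hr]
    exact (Real.abs_exp_sub_one_le (hlog.trans hm1)).trans (by linarith)
  calc |l x - x| = |(r - 1) * (x - u)| := by
        simp only [r, hu]
        field_simp [(sub_pos.2 hux).ne']
        ring_nf
    _ = |r - 1| * (x - u) := by rw [abs_mul, abs_of_pos (sub_pos.2 hux)]
    _ ≤ 2 * m * (v - u) :=
        mul_le_mul hr1 (by linarith [hx.2]) (sub_pos.2 hux).le (by positivity)

lemma exists_adm_of_skorDist_lt {c : ℝ} (hbdd : ∃ M, ∀ x ∈ Icc u v, |f x - g x| ≤ M)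
    (h : skorDist u v f g < c) :
    ∃ l, Adm u v l ∧ ∃ m e : ℝ, m + e < c ∧
      (∀ s ∈ Icc u v, ∀ t ∈ Icc u v, s ≠ t → |Real.log ((l t - l s) / (t - s))| ≤ m) ∧
      ∀ x ∈ Icc u v, |f x - g (l x)| ≤ e := by
  obtain ⟨M, hM⟩ := hbdd
  have hid : 0 + M ∈ {c | ∃ l : ℝ → ℝ, Adm u v l ∧ ∃ m e : ℝ, m + e = c ∧
      (∀ s ∈ Icc u v, ∀ t ∈ Icc u v, s ≠ t → |Real.log ((l t - l s) / (t - s))| ≤ m) ∧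
      ∀ x ∈ Icc u v, |f x - g (l x)| ≤ e} := by
    refine ⟨id, ⟨strictMonoOn_id, image_id _⟩, 0, M, rfl, fun s _ t _ hst => ?_, hM⟩
    simp [div_self (sub_ne_zero.2 hst.symm)]
  obtain ⟨_, ⟨l, hl, m, e, rfl, hslope, hdist⟩, hlt⟩ := exists_lt_of_csInf_lt ⟨_, hid⟩ h
  exact ⟨l, hl, m, e, hlt, hslope, hdist⟩

def SkorohodClose (u v ε : ℝ) (f g : ℝ → ℝ) : Prop :=
  ∃ l, Adm u v l ∧ (∀ x ∈ Icc u v, |l x - x| ≤ ε) ∧ ∀ x ∈ Icc u v, |f x - g (l x)| ≤ ε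

lemma SkorohodClose.abs_sub_le_left (h : SkorohodClose u v ε f g) (huv : u ≤ v) :
    |f u - g u| ≤ ε := by
  obtain ⟨l, hl, -, hfg⟩ := h
  simpa only [hl.apply_left huv] using hfg u (left_mem_Icc.2 huv)

lemma SkorohodClose.abs_sub_le_right (h : SkorohodClose u v ε f g) (huv : u ≤ v) :
    |f v - g v| ≤ ε := by
  obtain ⟨l, hl, -, hfg⟩ := h
  simpa only [hl.apply_right huv] using hfg v (right_mem_Icc.2 huv)

/-- The boundedness assumptions rule out the junk value `sInf ∅ = 0` of `skorDist`. -/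
lemma eventually_skorohodClose {f : ℕ → ℝ → ℝ} (huv : u < v)
    (hf : ∀ n, ∃ M, ∀ x ∈ Icc u v, |f n x| ≤ M) (hg : ∃ M, ∀ x ∈ Icc u v, |g x| ≤ M)
    (hconv : Tendsto (fun n => skorDist u v (f n) g) atTop (𝓝 0)) (hε : 0 < ε) :
    ∀ᶠ n in atTop, SkorohodClose u v ε (f n) g := by
  set c := min (min ε 1) (ε / (2 * (v - u)))
  have hc : 0 < c := lt_min (lt_min hε one_pos) (div_pos hε (by linarith))
  filter_upwards [hconv.eventually (eventually_lt_nhds hc)] with n hn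
  have hbdd : ∃ M, ∀ x ∈ Icc u v, |f n x - g x| ≤ M := by
    obtain ⟨M, hM⟩ := hf n
    obtain ⟨M', hM'⟩ := hg
    exact ⟨M + M', fun x hx => (abs_sub _ _).trans (add_le_add (hM x hx) (hM' x hx))⟩
  obtain ⟨l, hl, m, e, hme, hslope, hdist⟩ := exists_adm_of_skorDist_lt hbdd hn
  have hm : 0 ≤ m := (abs_nonneg _).trans
    (hslope u (left_mem_Icc.2 huv.le) v (right_mem_Icc.2 huv.le) huv.ne)
  have he : 0 ≤ e := (abs_nonneg _).trans (hdist u (left_mem_Icc.2 huv.le))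
  have hmc : m < c := by linarith
  have hm' : 2 * m * (v - u) ≤ ε := by
    have := (lt_div_iff₀ (by linarith : 0 < 2 * (v - u))).1 (hmc.trans_le (min_le_right _ _))
    linarith
  refine ⟨l, hl, fun x hx => ?_, fun x hx => (hdist x hx).trans ?_⟩
  · have hm1 : m ≤ 1 := (hmc.trans_le ((min_le_left _ _).trans (min_le_right _ _))).le
    exact (hl.abs_sub_le hm hm1 hslope hx).trans hm'
  · have : c ≤ ε := (min_le_left _ _).trans (min_le_left _ _)
    linarith

end Skorohod

/-- The value of the pure jump function on the cell `[A k, A (k + 1))`: the number of jumps between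
`0` and the cell. -/
def jumpCount (k : ℤ) : ℤ := if 0 ≤ k then k else -k - 1

lemma jumpCount_eq_jumpCount_iff {j k : ℤ} : jumpCount j = jumpCount k ↔ j = k ∨ j + k = -1 := by
  unfold jumpCount
  split_ifs <;> omega

lemma IsPureJump.isStepFunction {A V : ℤ → ℝ} {ψ J : ℝ → ℝ} (hJ : IsPureJump A J)
    (h : IsStepFunction A V ψ) : IsStepFunction A (fun k => (jumpCount k : ℝ)) J := by
  refine ⟨h.1, h.2.1, h.2.2.1, h.2.2.2.1, fun k t h1 h2 => ?_⟩
  show J t = ((jumpCount k : ℤ) : ℝ)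
  rw [hJ k t h1 h2, jumpCount]
  split_ifs <;> rfl

section JumpAlignment

variable {An A0 : ℤ → ℝ} {Jn J0 : ℝ → ℝ} {C ε : ℝ} {j k : ℤ} {s t : ℝ}

lemma eq_or_add_eq_neg_one_of_abs_sub_lt_one
    (hn : IsStepFunction An (fun k => (jumpCount k : ℝ)) Jn)
    (h0 : IsStepFunction A0 (fun k => (jumpCount k : ℝ)) J0)
    (hs : s ∈ Ico (An j) (An (j + 1))) (ht : t ∈ Ico (A0 k) (A0 (k + 1)))
    (h : |Jn s - J0 t| < 1) : j = k ∨ j + k = -1 := by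
  rw [hn.apply_eq hs, h0.apply_eq ht, ← Int.cast_sub, ← Int.cast_abs, ← Int.cast_one, Int.cast_lt,
    Int.abs_lt_one_iff, sub_eq_zero] at h
  exact jumpCount_eq_jumpCount_iff.1 h

/-- The pure jump functions count jumps away from `0`, so cells of the same count and sign agree. -/
lemma mem_Ico_of_abs_sub_lt_one (hn : IsStepFunction An (fun k => (jumpCount k : ℝ)) Jn)
    (h0 : IsStepFunction A0 (fun k => (jumpCount k : ℝ)) J0)
    (ht : t ∈ Ico (A0 k) (A0 (k + 1))) (h : |Jn t - J0 t| < 1) :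
    t ∈ Ico (An k) (An (k + 1)) := by
  obtain ⟨j, hj⟩ := hn.exists_mem_Ico t
  have hjk := eq_or_add_eq_neg_one_of_abs_sub_lt_one hn h0 hj ht h
  have hsign : 0 ≤ j ↔ 0 ≤ k := (hn.nonneg_iff hj).trans (h0.nonneg_iff ht).symm
  obtain rfl : j = k := by omega
  exact hj

lemma jump_le_of_skorohodClose (hn : IsStepFunction An (fun k => (jumpCount k : ℝ)) Jn)
    (h0 : IsStepFunction A0 (fun k => (jumpCount k : ℝ)) J0)
    (hclose : SkorohodClose (-C) C ε Jn J0) (hε : 0 < ε) (hε1 : ε < 1) (hkC : A0 (k + 1) ≤ C)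
    (hgap : ε < A0 (k + 1) - max (A0 k) (-C)) (hk0 : k + 1 ≠ 0) :
    An (k + 1) ≤ A0 (k + 1) + ε := by
  obtain ⟨l, hl, hlid, hJ⟩ := hclose
  have hlo := le_max_left (A0 k) (-C)
  have hmem : A0 (k + 1) ∈ Icc (-C) C := ⟨by linarith [le_max_right (A0 k) (-C)], hkC⟩
  obtain ⟨s, hs, hls⟩ : A0 (k + 1) ∈ l '' Icc (-C) C := by rw [hl.2]; exact hmem
  have hsl := abs_le.1 (hlid s hs)
  rw [hls] at hsl
  obtain ⟨j, hj⟩ := hn.exists_mem_Ico s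
  have hjk := eq_or_add_eq_neg_one_of_abs_sub_lt_one hn h0 hj
    ⟨le_rfl, h0.strictMono (lt_add_one _)⟩ (by rw [← hls]; linarith [hJ s hs])
  have hkj : k + 1 ≤ j := by
    rcases lt_or_ge k 0 with hk | hk
    · omega
    · -- `s` lies to the right of `A0 k ≥ A0 0 = 0`, so `j` is not the negative index `-k - 2`.
      have := h0.apply_zero ▸ h0.strictMono.monotone hk
      have := (hn.nonneg_iff hj).2 (by linarith)
      omega
  linarith [hn.strictMono.monotone hkj, hj.1]

lemma le_jump_of_skorohodClose (hn : IsStepFunction An (fun k => (jumpCount k : ℝ)) Jn)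
    (h0 : IsStepFunction A0 (fun k => (jumpCount k : ℝ)) J0)
    (hclose : SkorohodClose (-C) C ε Jn J0) (hε : 0 < ε) (hε1 : ε < 1) (hkC : A0 (k + 1) ≤ C)
    (hgap : ε < A0 (k + 1) - max (A0 k) (-C)) (hk0 : k + 1 ≠ 0) :
    A0 (k + 1) - 2 * ε ≤ An (k + 1) := by
  obtain ⟨l, hl, hlid, hJ⟩ := hclose
  have ht : A0 (k + 1) - ε ∈ Ico (A0 k) (A0 (k + 1)) :=
    ⟨by linarith [le_max_left (A0 k) (-C)], by linarith⟩
  have hmem : A0 (k + 1) - ε ∈ Icc (-C) C := ⟨by linarith [le_max_right (A0 k) (-C)], by linarith⟩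
  obtain ⟨s, hs, hls⟩ : A0 (k + 1) - ε ∈ l '' Icc (-C) C := by rw [hl.2]; exact hmem
  have hsl := abs_le.1 (hlid s hs)
  rw [hls] at hsl
  obtain ⟨j, hj⟩ := hn.exists_mem_Ico s
  have hjk := eq_or_add_eq_neg_one_of_abs_sub_lt_one hn h0 hj ht
    (by rw [← hls]; linarith [hJ s hs])
  have hjk' : j ≤ k := by
    rcases lt_or_ge k 0 with hk | hk
    · -- `s ≤ A0 (k + 1) < A0 0 = 0`, so `j` is not the nonnegative index `-k - 1`.
      have := h0.apply_zero ▸ h0.strictMono (show k + 1 < 0 by omega)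
      have := mt (hn.nonneg_iff hj).1 (by linarith)
      omega
    · omega
  linarith [hn.strictMono.monotone (show j + 1 ≤ k + 1 by omega), hj.2]

lemma abs_jump_sub_le_of_skorohodClose (hn : IsStepFunction An (fun k => (jumpCount k : ℝ)) Jn)
    (h0 : IsStepFunction A0 (fun k => (jumpCount k : ℝ)) J0)
    (hclose : SkorohodClose (-C) C ε Jn J0) (hε : 0 < ε) (hε1 : ε < 1) (hkC : A0 (k + 1) ≤ C)
    (hgap : ε < A0 (k + 1) - max (A0 k) (-C)) : |An (k + 1) - A0 (k + 1)| ≤ 2 * ε := by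
  rcases eq_or_ne (k + 1) 0 with hk0 | hk0
  · rw [hk0, hn.apply_zero, h0.apply_zero, sub_self, abs_zero]
    positivity
  · exact abs_le.2 ⟨by linarith [le_jump_of_skorohodClose hn h0 hclose hε hε1 hkC hgap hk0],
      by linarith [jump_le_of_skorohodClose hn h0 hclose hε hε1 hkC hgap hk0]⟩

end JumpAlignment

lemma abs_clip_sub_le {A B : ℤ → ℝ} {C δ : ℝ} {kmin kmax : ℤ} (hδ : 0 ≤ δ)
    (hA : A kmin ≤ -C) (hB : B kmin ≤ -C) (hA' : C ≤ A (kmax + 1)) (hB' : C ≤ B (kmax + 1))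
    (h : ∀ k ∈ Ico kmin kmax, |A (k + 1) - B (k + 1)| ≤ δ) (k : ℤ) (hk : k ∈ Icc kmin kmax) :
    |max (A k) (-C) - max (B k) (-C)| ≤ δ ∧ |min (A (k + 1)) C - min (B (k + 1)) C| ≤ δ := by
  constructor
  · rcases hk.1.eq_or_lt with rfl | hlt
    · rwa [max_eq_right hA, max_eq_right hB, sub_self, abs_zero]
    · have := h (k - 1) ⟨by omega, by linarith [hk.2]⟩
      rw [sub_add_cancel] at this
      exact (abs_max_sub_max_le_abs _ _ _).trans this
  · rcases hk.2.eq_or_lt with rfl | hlt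
    · rwa [min_eq_right hA', min_eq_right hB', sub_self, abs_zero]
    · refine (abs_min_sub_min_le_max _ _ _ _).trans (max_le (h k ⟨hk.1, hlt⟩) ?_)
      rwa [sub_self, abs_zero]

/-- Compare the levels at the midpoint of the clipped cell `k`. -/
lemma abs_level_sub_le_of_skorohodClose {An A0 Vn V0 : ℤ → ℝ} {ψn ψ0 : ℝ → ℝ} {C η : ℝ} {k : ℤ}
    (hn : IsStepFunction An Vn ψn) (h0 : IsStepFunction A0 V0 ψ0)
    (hclose : SkorohodClose (-C) C η ψn ψ0)
    (hclip : |max (An k) (-C) - max (A0 k) (-C)| ≤ 2 * η ∧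
      |min (An (k + 1)) C - min (A0 (k + 1)) C| ≤ 2 * η)
    (hwidth : 4 * η < min (A0 (k + 1)) C - max (A0 k) (-C)) : |Vn k - V0 k| ≤ η := by
  obtain ⟨l, -, hlid, hψ⟩ := hclose
  have hL := max_le_iff.1 (le_refl (max (A0 k) (-C)))
  have hR := le_min_iff.1 (le_refl (min (A0 (k + 1)) C))
  have hLn := le_max_left (An k) (-C)
  have hRn := min_le_left (An (k + 1)) C
  have h1 := abs_le.1 hclip.1
  have h2 := abs_le.1 hclip.2
  set t := (max (A0 k) (-C) + min (A0 (k + 1)) C) / 2 with ht_def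
  have ht : t ∈ Icc (-C) C := ⟨by linarith, by linarith⟩
  have h3 := abs_le.1 (hlid t ht)
  have htn : t ∈ Ico (An k) (An (k + 1)) := ⟨by linarith, by linarith⟩
  have ht0 : l t ∈ Ico (A0 k) (A0 (k + 1)) := ⟨by linarith, by linarith⟩
  simpa only [hn.apply_eq htn, h0.apply_eq ht0] using hψ t ht

namespace DominantCell

variable {C η : ℝ} {A V : ℤ → ℝ} {kmin kmax ks : ℤ}

lemma of_abs_sub_le {B W : ℤ → ℝ} (hd : DominantCell C A V kmin kmax ks)
    (hmin : -C ∈ Ico (B kmin) (B (kmin + 1))) (hmax : C ∈ Ico (B kmax) (B (kmax + 1)))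
    (hW : ∀ k ∈ Icc kmin kmax, |W k - V k| ≤ η)
    (hgap : ∀ k ∈ Icc kmin kmax, k ≠ ks → 2 * η < V ks - V k) :
    DominantCell C B W kmin kmax ks :=
  ⟨hmin, hmax, hd.mem, fun k hk hne => by
    linarith [abs_le.1 (hW k hk), abs_le.1 (hW ks hd.mem), hgap k hk hne]⟩

lemma eventually_small (hd : DominantCell C A V kmin kmax ks) (hA : StrictMono A) (hC : 0 < C)
    (hmax : A kmax < C) :
    ∀ᶠ η in 𝓝[>] (0 : ℝ), 0 < η ∧ η < 1 ∧ ∀ k ∈ Icc kmin kmax,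
      4 * η < min (A (k + 1)) C - max (A k) (-C) ∧ (k ≠ ks → 2 * η < V ks - V k) := by
  have hk : ∀ k ∈ Icc kmin kmax, ∀ᶠ η in 𝓝 (0 : ℝ),
      4 * η < min (A (k + 1)) C - max (A k) (-C) ∧ (k ≠ ks → 2 * η < V ks - V k) := by
    intro k hk
    have hwidth : max (A k) (-C) < min (A (k + 1)) C :=
      max_lt (lt_min (hA (lt_add_one k)) ((hA.monotone hk.2).trans_lt hmax))
        (lt_min (hd.left_mem.2.trans_le (hA.monotone (by linarith [hk.1]))) (by linarith))
    have hgap : ∀ᶠ η in 𝓝 (0 : ℝ), k ≠ ks → η < (V ks - V k) / 2 := by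
      rcases eq_or_ne k ks with rfl | hne
      · exact Eventually.of_forall fun _ h => absurd rfl h
      · filter_upwards [eventually_lt_nhds (half_pos (sub_pos.2 (hd.lt k hk hne)))] with η h
        exact fun _ => h
    filter_upwards [eventually_lt_nhds (by linarith : (0 : ℝ) < (min (A (k + 1)) C -
      max (A k) (-C)) / 4), hgap] with η h1 h2
    exact ⟨by linarith, fun hne => by linarith [h2 hne]⟩
  filter_upwards [self_mem_nhdsWithin, nhdsWithin_le_nhds (eventually_lt_nhds one_pos),
    nhdsWithin_le_nhds ((eventually_all_finite (finite_Icc kmin kmax)).2 hk)] with η h0 h1 h2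
  exact ⟨h0, h1, h2⟩

end DominantCell

theorem setOf_isMaxPtOn_eq_of_skorohodClose {An A0 Vn V0 : ℤ → ℝ} {ψn Jn ψ0 J0 : ℝ → ℝ}
    {C η : ℝ} {kmin kmax ks : ℤ} (hC : 0 < C)
    (hψn : IsStepFunction An Vn ψn) (hJn : IsPureJump An Jn)
    (hψ0 : IsStepFunction A0 V0 ψ0) (hJ0 : IsPureJump A0 J0)
    (hd : DominantCell C A0 V0 kmin kmax ks) (hη : 0 < η) (hη1 : η < 1)
    (hsmall : ∀ k ∈ Icc kmin kmax,
      4 * η < min (A0 (k + 1)) C - max (A0 k) (-C) ∧ (k ≠ ks → 2 * η < V0 ks - V0 k))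
    (hJ : SkorohodClose (-C) C η Jn J0) (hψ : SkorohodClose (-C) C η ψn ψ0) :
    {x | IsMaxPtOn C ψn x} = Icc (max (An ks) (-C)) (min (An (ks + 1)) C) ∧
      |max (An ks) (-C) - max (A0 ks) (-C)| ≤ 2 * η ∧
      |min (An (ks + 1)) C - min (A0 (ks + 1)) C| ≤ 2 * η := by
  have hJn' := hJn.isStepFunction hψn
  have hJ0' := hJ0.isStepFunction hψ0
  have hCC : -C ≤ C := by linarith
  have hmin := mem_Ico_of_abs_sub_lt_one hJn' hJ0' hd.left_mem
    ((hJ.abs_sub_le_left hCC).trans_lt hη1)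
  have hmax := mem_Ico_of_abs_sub_lt_one hJn' hJ0' hd.right_mem
    ((hJ.abs_sub_le_right hCC).trans_lt hη1)
  have hjumps : ∀ k ∈ Ico kmin kmax, |An (k + 1) - A0 (k + 1)| ≤ 2 * η := fun k hk =>
    abs_jump_sub_le_of_skorohodClose hJn' hJ0' hJ hη hη1
      ((hψ0.strictMono.monotone (show k + 1 ≤ kmax by linarith [hk.2])).trans hd.right_mem.1)
      (by linarith [(hsmall k ⟨hk.1, hk.2.le⟩).1, min_le_left (A0 (k + 1)) C])
  have hclip := abs_clip_sub_le (by positivity) hmin.1 hd.left_mem.1 hmax.2.le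
    hd.right_mem.2.le hjumps
  have hdn : DominantCell C An Vn kmin kmax ks :=
    hd.of_abs_sub_le hmin hmax
      (fun k hk => abs_level_sub_le_of_skorohodClose hψn hψ0 hψ (hclip k hk) (hsmall k hk).1)
      (fun k hk => (hsmall k hk).2)
  exact ⟨hψn.setOf_isMaxPtOn_eq hC.le hdn, hclip ks hd.mem⟩

lemma tendsto_of_eventually_abs_sub_le {ι : Type*} {l : Filter ι} {u : ι → ℝ} {a c : ℝ}
    (h : ∀ᶠ η in 𝓝[>] (0 : ℝ), ∀ᶠ n in l, |u n - a| ≤ c * η) : Tendsto u l (𝓝 a) := by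
  refine Metric.tendsto_nhds.2 fun ε hε => ?_
  have hc : ∀ᶠ η in 𝓝 (0 : ℝ), c * η < ε :=
    ((continuous_const_mul c).tendsto' 0 0 (mul_zero c)).eventually (eventually_lt_nhds hε)
  obtain ⟨η, hη, hηε⟩ := (h.and (nhdsWithin_le_nhds hc)).exists
  exact hη.mono fun n hn => (Real.dist_eq _ _).symm ▸ hn.trans_lt hηε

/-- Continuous mapping theorem for the smallest and largest argmax of step functions:
if `ψ_n → ψ_0` and the associated pure jump functions `J_n → J_0` in the Skorohod
topology on `[-C,C]`, `ψ_0` has no jumps at `±C`, and among any finite set of levels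
of `ψ_0` there is a unique maximal one, then the smallest (resp. largest) maximizers
of `ψ_n` on `[-C,C]` converge to the smallest (resp. largest) maximizer of `ψ_0`. -/
theorem argmax_convergence_step_functions (C : ℝ) (hC : 0 < C)
    (A : ℕ → ℤ → ℝ) (V : ℕ → ℤ → ℝ) (ψ : ℕ → ℝ → ℝ) (J : ℕ → ℝ → ℝ)
    (A0 : ℤ → ℝ) (V0 : ℤ → ℝ) (ψ0 : ℝ → ℝ) (J0 : ℝ → ℝ)
    (hstep : ∀ n, IsStepFunction (A n) (V n) (ψ n))
    (hjumpfn : ∀ n, IsPureJump (A n) (J n))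
    (hstep0 : IsStepFunction A0 V0 ψ0) (hjumpf0 : IsPureJump A0 J0)
    (hconvψ : Filter.Tendsto (fun n => skorDist (-C) C (ψ n) ψ0)
      Filter.atTop (nhds 0))
    (hconvJ : Filter.Tendsto (fun n => skorDist (-C) C (J n) J0)
      Filter.atTop (nhds 0))
    (hnojump : ∀ k : ℤ, A0 k ≠ C ∧ A0 k ≠ -C)
    (huniq : ∀ S : Finset ℤ, S.Nonempty →
      ∃! j : ℤ, j ∈ S ∧ ∀ i ∈ S, V0 i ≤ V0 j) :
    (∀ (x : ℕ → ℝ) (x0 : ℝ), (∀ n, IsSmallestMaxOn C (ψ n) (x n)) →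
      IsSmallestMaxOn C ψ0 x0 → Filter.Tendsto x Filter.atTop (nhds x0)) ∧
    (∀ (x : ℕ → ℝ) (x0 : ℝ), (∀ n, IsLargestMaxOn C (ψ n) (x n)) →
      IsLargestMaxOn C ψ0 x0 → Filter.Tendsto x Filter.atTop (nhds x0)) := by
  obtain ⟨kmin, hmin⟩ := hstep0.exists_mem_Ico (-C)
  obtain ⟨kmax, hmax⟩ := hstep0.exists_mem_Ico C
  obtain ⟨ks, hd⟩ := exists_dominantCell hstep0.strictMono.monotone hC.le hmin hmax huniq
  have hkey : ∀ᶠ η in 𝓝[>] (0 : ℝ), ∀ᶠ n in atTop,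
      {x | IsMaxPtOn C (ψ n) x} = Icc (max (A n ks) (-C)) (min (A n (ks + 1)) C) ∧
      |max (A n ks) (-C) - max (A0 ks) (-C)| ≤ 2 * η ∧
      |min (A n (ks + 1)) C - min (A0 (ks + 1)) C| ≤ 2 * η := by
    filter_upwards [hd.eventually_small hstep0.strictMono hC
      (hmax.1.lt_of_ne (hnojump kmax).1)] with η ⟨hη, hη1, hsmall⟩
    filter_upwards [eventually_skorohodClose (by linarith)
        (fun n => ((hjumpfn n).isStepFunction (hstep n)).exists_abs_le _ _)
        ((hjumpf0.isStepFunction hstep0).exists_abs_le _ _) hconvJ hη,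
      eventually_skorohodClose (by linarith) (fun n => (hstep n).exists_abs_le _ _)
        (hstep0.exists_abs_le _ _) hconvψ hη] with n hJ hψ
    exact setOf_isMaxPtOn_eq_of_skorohodClose hC (hstep n) (hjumpfn n) hstep0 hjumpf0 hd hη hη1
      hsmall hJ hψ
  obtain ⟨_, hmaxset⟩ := hkey.exists
  have hS0 := hstep0.setOf_isMaxPtOn_eq hC.le hd
  have hlo := tendsto_of_eventually_abs_sub_le (hkey.mono fun _ h => h.mono fun _ h => h.2.1)
  have hhi := tendsto_of_eventually_abs_sub_le (hkey.mono fun _ h => h.mono fun _ h => h.2.2)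
  refine ⟨fun x x0 hx hx0 => ?_, fun x x0 hx hx0 => ?_⟩
  · rw [hx0.eq_of_setOf_eq_Icc hS0]
    exact hlo.congr' (hmaxset.mono fun n h => ((hx n).eq_of_setOf_eq_Icc h.1).symm)
  · rw [hx0.eq_of_setOf_eq_Icc hS0]
    exact hhi.congr' (hmaxset.mono fun n h => ((hx n).eq_of_setOf_eq_Icc h.1).symm)
end
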